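/- Let ℘ be a prime of degree h ≥ 1 in A and 𝔮 a primitive root modulo ℘. For all ᾱ, β̄ ∈ S_h^ω, one has the congruence of integer polynomials Σ_{m=0}^{q^h−2} ε_m(z_{ᾱ⋆β̄}(h)) x^m ≡ (Σ_{m=0}^{q^h−2} ε_m(z_ᾱ(h)) x^m) · (Σ_{m=0}^{q^h−2} ε_m(z_β̄(h)) x^m) (mod (x^{q^h−1} − 1)) in ℤ[x]; i.e., the map ᾱ ↦ Σ_{m=0}^{q^h−2} ε_m(z_ᾱ(h)) x^m is a semigroup homomorphism from (S_h^ω, ⋆) to the multiplicative semigroup ℤ[x]/(x^{q^h−1} − 1). -/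

import Mathlib

/-
Since `D_{i+1} = (T^{q^{i+1}} - T) D_i^q`, a Carlitz binomial coefficient `binom(n, m)_C` is the
product of the factors `T^{q^i} - T` over the positions `i` of the carries in the base-`q` addition
`m + (n - m)`. Modulo a prime `℘` of degree `h` we have `T^{q^h} ≡ T`, so these factors depend on
`i` only modulo `h` and vanish for `h ∣ i`. Splitting off the lowest `t = h L` digits therefore
gives the Lucas-type congruence
`binom(n₁ + q^t n₂, m₁ + q^t m₂) ≡ binom(n₁, m₁) binom(n₂, m₂)` for `n₁, m₁ < q^t`
(if `m₁ > n₁`, the carry at position `t` kills the left side).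
Modulo `x^{q^h-1} - 1`, `Σ_j ε_j(n) x^j` equals `Σ_m χ(binom(n, m)_C)` for the multiplicative
character `χ` of `A/℘` with `χ(𝔮) = x`, and the congruence makes this sum multiplicative.
-/

open Polynomial

/-- `D_i = ∏_{r=0}^{i-1} (T^{q^i} - T^{q^r})`, with `D_0 = 1`. -/
noncomputable def carlitzD (Fq : Type*) [Field Fq] (q i : ℕ) : Polynomial Fq :=
  ∏ r ∈ Finset.range i, (X ^ q ^ i - X ^ q ^ r)

/-- The Carlitz factorial `n!_C = ∏_i D_i^{n_i}`, where `n = Σ n_i q^i` is the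
`q`-adic expansion of `n` (the digit `n_i` is `n / q^i % q`). -/
noncomputable def carlitzFactorial (Fq : Type*) [Field Fq] (q n : ℕ) : Polynomial Fq :=
  ∏ i ∈ Finset.range (n + 1), carlitzD Fq q i ^ (n / q ^ i % q)

/-- The Carlitz binomial coefficient `binom(n,m)_C = n!_C / (m!_C (n-m)!_C)` for `m ≤ n`,
and `0` otherwise. -/
noncomputable def carlitzBinom (Fq : Type*) [Field Fq] (q n m : ℕ) : Polynomial Fq :=
  if m ≤ n then
    carlitzFactorial Fq q n / (carlitzFactorial Fq q m * carlitzFactorial Fq q (n - m))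
  else 0

/-- `ε_j(n)`: the number of integers `0 ≤ m ≤ n` with `binom(n,m)_C ≡ 𝔮^j (mod ℘)`,
where `𝔮` is (the class of) a primitive root modulo `℘`, viewed as a unit of `A/℘A`. -/
noncomputable def carlitzEps (Fq : Type*) [Field Fq] (q : ℕ) (℘ : Polynomial Fq)
    (𝔮 : (Polynomial Fq ⧸ Ideal.span {℘})ˣ) (j : ℤ) (n : ℕ) : ℕ :=
  Set.ncard {m : ℕ | m ≤ n ∧
    Ideal.Quotient.mk (Ideal.span {℘}) (carlitzBinom Fq q n m) = ↑(𝔮 ^ j)}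

open Finset

section Sums

variable {R : Type*} [CommSemiring R]

theorem sum_range_mul_eq_sum_sum (f : ℕ → R) (Q k : ℕ) :
    ∑ m ∈ range (Q * k), f m = ∑ j ∈ range k, ∑ i ∈ range Q, f (i + Q * j) := by
  induction k with
  | zero => simp
  | succ k ih =>
    rw [Nat.mul_succ, sum_range_add, ih, sum_range_succ]
    simp only [add_comm (Q * k)]

theorem sum_range_add_mul_eq_mul (b : ℕ → ℕ → R) (hb : ∀ {n m}, n < m → b n m = 0)
    {Q n₁ : ℕ} (n₂ : ℕ) (hn₁ : n₁ < Q)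
    (hmul : ∀ m₁ < Q, ∀ m₂, b (n₁ + Q * n₂) (m₁ + Q * m₂) = b n₁ m₁ * b n₂ m₂) :
    ∑ m ∈ range (n₁ + Q * n₂ + 1), b (n₁ + Q * n₂) m =
      (∑ m ∈ range (n₁ + 1), b n₁ m) * ∑ m ∈ range (n₂ + 1), b n₂ m := by
  have hext : ∀ {n M}, n < M → ∑ m ∈ range (n + 1), b n m = ∑ m ∈ range M, b n m :=
    fun hnM => sum_subset (range_subset_range.mpr hnM) fun m _ hm =>
      hb (by simpa using hm)
  rw [hext (show _ < Q * (n₂ + 1) by rw [mul_add]; omega), hext hn₁, sum_range_mul_eq_sum_sum,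
    sum_mul_sum, sum_comm]
  exact sum_congr rfl fun m₁ hm₁ => sum_congr rfl fun m₂ _ => hmul m₁ (mem_range.mp hm₁) m₂

end Sums

section MulChar

variable {M R : Type*} [CommMonoid M] {g : Mˣ}

theorem exists_mulChar_apply_eq [CommMonoidWithZero R] (hg : ∀ u, u ∈ Subgroup.zpowers g)
    (hfin : IsOfFinOrder g) {y : R} (hy : y ^ orderOf g = 1) : ∃ χ : MulChar M R, χ g = y := by
  let y' : Rˣ := Units.ofPowEqOne y _ hy hfin.orderOf_pos.ne'
  have hdvd : orderOf y' ∣ orderOf g := orderOf_dvd_of_pow_eq_one (Units.ext (by simp [y']))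
  exact ⟨MulChar.ofUnitHom (monoidHomOfForallMemZpowers hg hdvd), by
    rw [MulChar.ofUnitHom_coe, monoidHomOfForallMemZpowers_apply_gen]; rfl⟩

theorem MulChar.eq_sum_range_orderOf [DecidableEq M] [CommSemiring R]
    (hg : ∀ u, u ∈ Subgroup.zpowers g) (hfin : IsOfFinOrder g) (χ : MulChar M R) (ζ : M) :
    χ ζ = ∑ j ∈ range (orderOf g), if ζ = ↑(g ^ j) then χ g ^ j else 0 := by
  by_cases hζ : IsUnit ζ
  · obtain ⟨u, rfl⟩ := hζ
    obtain ⟨k, hk⟩ : ∃ k : ℕ, g ^ k = u := hfin.mem_powers_iff_mem_zpowers.mpr (hg u)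
    rw [← pow_mod_orderOf] at hk
    subst hk
    have hkN := Nat.mod_lt k hfin.orderOf_pos
    rw [sum_eq_single_of_mem _ (mem_range.mpr hkN), if_pos rfl, Units.val_pow_eq_pow_val,
      map_pow]
    refine fun j hj hne => if_neg fun h => hne ?_
    exact pow_injOn_Iio_orderOf (mem_range.mp hj) hkN (Units.ext h).symm
  · rw [χ.map_nonunit hζ]
    exact (sum_eq_zero fun j _ => if_neg fun h => hζ (by rw [h]; exact Units.isUnit _)).symm

end MulChar

section QuotientField

variable {Fq : Type*} [Field Fq] {℘ : Fq[X]}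

theorem natCard_quotient_span_singleton (h℘ : ℘ ≠ 0) :
    Nat.card (Fq[X] ⧸ Ideal.span {℘}) = Nat.card Fq ^ ℘.natDegree := by
  have := (AdjoinRoot.powerBasis h℘).finite
  show Nat.card (AdjoinRoot ℘) = _
  rw [Module.natCard_eq_pow_finrank (K := Fq), (AdjoinRoot.powerBasis h℘).finrank,
    AdjoinRoot.powerBasis_dim]

theorem finite_quotient_span_singleton [Finite Fq] (h℘ : ℘ ≠ 0) : Finite (Fq[X] ⧸ Ideal.span {℘}) :=
  have := (AdjoinRoot.powerBasis h℘).finite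
  Module.finite_of_finite Fq (M := AdjoinRoot ℘)

theorem pow_natCard_pow_natDegree_pow [Finite Fq] (hirr : Irreducible ℘) (L : ℕ)
    (ζ : Fq[X] ⧸ Ideal.span {℘}) : ζ ^ (Nat.card Fq ^ ℘.natDegree) ^ L = ζ := by
  have := PrincipalIdealRing.isMaximal_of_irreducible hirr
  let := Ideal.Quotient.field (Ideal.span {℘})
  have := finite_quotient_span_singleton hirr.ne_zero
  let := Fintype.ofFinite (Fq[X] ⧸ Ideal.span {℘})
  rw [← natCard_quotient_span_singleton hirr.ne_zero, Nat.card_eq_fintype_card]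
  exact FiniteField.pow_card_pow L ζ

theorem orderOf_eq_natCard_pow_natDegree_sub_one [Finite Fq] (hirr : Irreducible ℘)
    {𝔮 : (Fq[X] ⧸ Ideal.span {℘})ˣ} (hg : ∀ u, u ∈ Subgroup.zpowers 𝔮) :
    orderOf 𝔮 = Nat.card Fq ^ ℘.natDegree - 1 := by
  have := PrincipalIdealRing.isMaximal_of_irreducible hirr
  let := Ideal.Quotient.field (Ideal.span {℘})
  rw [orderOf_eq_card_of_forall_mem_zpowers hg, Nat.card_units,
    natCard_quotient_span_singleton hirr.ne_zero]

end QuotientField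

namespace Nat

/-- The carry into digit `i` when `m` and `k` are added in base `q`. -/
def carry (q m k i : ℕ) : ℕ := (m % q ^ i + k % q ^ i) / q ^ i

variable {q : ℕ}

theorem carry_zero (m k : ℕ) : carry q m k 0 = 0 := by simp [carry, Nat.mod_one]

theorem carry_eq_zero_of_lt {m k i : ℕ} (h : m + k < q ^ i) : carry q m k i = 0 :=
  Nat.div_eq_of_lt <| (Nat.add_le_add (Nat.mod_le _ _) (Nat.mod_le _ _)).trans_lt h

theorem add_div_pow_eq (hq : 0 < q) (m k i : ℕ) :
    (m + k) / q ^ i = m / q ^ i + k / q ^ i + carry q m k i := by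
  have hqi : 0 < q ^ i := Nat.pow_pos hq
  have hsplit : m + k = q ^ i * (m / q ^ i + k / q ^ i) + (m % q ^ i + k % q ^ i) := by
    have := Nat.div_add_mod m (q ^ i); have := Nat.div_add_mod k (q ^ i); rw [Nat.mul_add]; omega
  rw [hsplit, Nat.mul_add_div hqi, carry]

theorem digit_add_add_mul_carry (hq : 0 < q) (m k i : ℕ) :
    (m + k) / q ^ i % q + q * carry q m k (i + 1) =
      m / q ^ i % q + k / q ^ i % q + carry q m k i := by
  have hdiv : ∀ n, n / q ^ (i + 1) = n / q ^ i / q := fun n => by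
    rw [pow_succ, Nat.div_div_eq_div_mul]
  have hi := add_div_pow_eq hq m k i
  have hi1 := add_div_pow_eq hq m k (i + 1)
  rw [hdiv, hdiv, hdiv, hi] at hi1
  -- expanding all three quotients by `add_div_pow_eq` makes the identity linear
  have h1 := Nat.div_add_mod (m / q ^ i) q
  have h2 := Nat.div_add_mod (k / q ^ i) q
  have h3 := Nat.div_add_mod (m / q ^ i + k / q ^ i + carry q m k i) q
  have h4 := congrArg (q * ·) hi1
  simp only [Nat.mul_add] at h4
  rw [hi]
  omega

theorem add_mul_pow_mod_pow_add {t m₁ : ℕ} (m₂ j : ℕ) (h₁ : m₁ < q ^ t) :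
    (m₁ + q ^ t * m₂) % q ^ (t + j) = m₁ + q ^ t * (m₂ % q ^ j) := by
  have hqt : 0 < q ^ t := by omega
  rw [pow_add, Nat.mod_mul, Nat.add_mul_mod_self_left, Nat.mod_eq_of_lt h₁,
    Nat.add_mul_div_left _ _ hqt, Nat.div_eq_of_lt h₁, Nat.zero_add]

variable {t m₁ k₁ : ℕ} (m₂ k₂ : ℕ)

theorem carry_add_mul_pow_of_le {i : ℕ} (hi : i ≤ t) :
    carry q (m₁ + q ^ t * m₂) (k₁ + q ^ t * k₂) i = carry q m₁ k₁ i := by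
  obtain ⟨d, hd⟩ := pow_dvd_pow q hi
  simp only [carry, hd, mul_assoc, Nat.add_mul_mod_self_left]

theorem carry_add_mul_pow_add (hm : m₁ < q ^ t) (hk : k₁ < q ^ t) (hmk : m₁ + k₁ < q ^ t)
    (j : ℕ) : carry q (m₁ + q ^ t * m₂) (k₁ + q ^ t * k₂) (t + j) = carry q m₂ k₂ j := by
  have hqt : 0 < q ^ t := by omega
  rw [carry, add_mul_pow_mod_pow_add m₂ j hm, add_mul_pow_mod_pow_add k₂ j hk,
    show m₁ + q ^ t * (m₂ % q ^ j) + (k₁ + q ^ t * (k₂ % q ^ j)) =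
      (m₁ + k₁) + q ^ t * (m₂ % q ^ j + k₂ % q ^ j) by ring,
    pow_add, ← Nat.div_div_eq_div_mul, Nat.add_mul_div_left _ _ hqt, Nat.div_eq_of_lt hmk,
    Nat.zero_add, carry]

theorem carry_add_mul_pow_self (hm : m₁ < q ^ t) (hk : k₁ < q ^ t) (hmk : q ^ t ≤ m₁ + k₁) :
    carry q (m₁ + q ^ t * m₂) (k₁ + q ^ t * k₂) t = 1 := by
  rw [carry, Nat.add_mul_mod_self_left, Nat.add_mul_mod_self_left, Nat.mod_eq_of_lt hm,
    Nat.mod_eq_of_lt hk, Nat.div_eq_of_lt_le (k := 1) (by omega) (by omega)]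

end Nat

section Factorial

variable {Fq : Type*} [Field Fq] {q : ℕ}

theorem carlitzD_succ {p s : ℕ} [Fact p.Prime] [CharP Fq p] (hq : q = p ^ s) (i : ℕ) :
    carlitzD Fq q (i + 1) = (X ^ q ^ (i + 1) - X) * carlitzD Fq q i ^ q := by
  rw [carlitzD, prod_range_succ', pow_zero, pow_one, mul_comm, carlitzD, ← prod_pow]
  congr 1
  refine prod_congr rfl fun r _ => ?_
  rw [pow_succ q i, pow_succ q r, pow_mul, pow_mul, hq, sub_pow_char_pow]

theorem carlitzD_ne_zero (hq : 1 < q) (i : ℕ) : carlitzD Fq q i ≠ 0 :=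
  prod_ne_zero_iff.mpr fun r hr h => by
    have := congrArg natDegree (sub_eq_zero.mp h)
    rw [natDegree_X_pow, natDegree_X_pow] at this
    exact (Nat.pow_lt_pow_right hq (mem_range.mp hr)).ne' this

theorem carlitzFactorial_ne_zero (hq : 1 < q) (n : ℕ) : carlitzFactorial Fq q n ≠ 0 :=
  prod_ne_zero_iff.mpr fun i _ => pow_ne_zero _ (carlitzD_ne_zero hq i)

theorem carlitzFactorial_eq_prod (hq : 1 < q) {n R : ℕ} (hR : n < q ^ R) :
    carlitzFactorial Fq q n = ∏ i ∈ range R, carlitzD Fq q i ^ (n / q ^ i % q) := by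
  have htail : ∀ {R S : ℕ}, R ≤ S → n < q ^ R →
      ∏ i ∈ range R, carlitzD Fq q i ^ (n / q ^ i % q) =
        ∏ i ∈ range S, carlitzD Fq q i ^ (n / q ^ i % q) := fun hRS hnR =>
    prod_subset (range_subset_range.mpr hRS) fun i _ hi => by
      rw [Nat.div_eq_of_lt (hnR.trans_le (Nat.pow_le_pow_right (by omega)
        (not_lt.mp (mem_range.not.mp hi)))), Nat.zero_mod, pow_zero]
  rcases le_total R (n + 1) with h | h
  · exact (htail h hR).symm
  · exact htail h (Nat.lt_pow_self hq |>.trans (Nat.pow_lt_pow_right hq n.lt_succ_self))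

theorem prod_carlitzD_pow {p s : ℕ} [Fact p.Prime] [CharP Fq p] (hq : q = p ^ s) (c : ℕ → ℕ)
    (hc : c 0 = 0) (R : ℕ) :
    ∏ i ∈ range (R + 1), carlitzD Fq q i ^ c i =
      (∏ i ∈ range R, (X ^ q ^ (i + 1) - X) ^ c (i + 1)) *
        ∏ i ∈ range R, carlitzD Fq q i ^ (q * c (i + 1)) := by
  rw [prod_range_succ', hc, pow_zero, mul_one, ← prod_mul_distrib]
  refine prod_congr rfl fun i _ => ?_
  rw [carlitzD_succ hq, mul_pow, ← pow_mul]

theorem carlitzFactorial_add {p s : ℕ} [Fact p.Prime] [CharP Fq p] (hq : q = p ^ s)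
    (hq1 : 1 < q) {m k R : ℕ} (hR : m + k < q ^ R) :
    carlitzFactorial Fq q (m + k) =
      carlitzFactorial Fq q m * carlitzFactorial Fq q k *
        ∏ i ∈ range R, (X ^ q ^ (i + 1) - X) ^ Nat.carry q m k (i + 1) := by
  set W := ∏ i ∈ range R, carlitzD Fq q i ^ (q * Nat.carry q m k (i + 1))
  have hW : W ≠ 0 := prod_ne_zero_iff.mpr fun i _ => pow_ne_zero _ (carlitzD_ne_zero hq1 i)
  have hR1 : ∀ {n}, n ≤ m + k → n < q ^ (R + 1) := fun h =>
    h.trans_lt (hR.trans (Nat.pow_lt_pow_right hq1 R.lt_succ_self))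
  have hcR : Nat.carry q m k (R + 1) = 0 := Nat.carry_eq_zero_of_lt (hR1 le_rfl)
  -- `W` supplies the `q cᵢ₊₁` extra copies of `Dᵢ` that a carry out of digit `i` leaves behind
  refine mul_right_cancel₀ hW ?_
  calc carlitzFactorial Fq q (m + k) * W
      = ∏ i ∈ range (R + 1),
          carlitzD Fq q i ^ ((m + k) / q ^ i % q + q * Nat.carry q m k (i + 1)) := by
        simp only [pow_add, prod_mul_distrib]
        rw [carlitzFactorial_eq_prod hq1 (hR1 le_rfl),
          prod_range_succ (fun i => carlitzD Fq q i ^ (q * Nat.carry q m k (i + 1))), hcR, mul_zero,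
          pow_zero, mul_one]
    _ = ∏ i ∈ range (R + 1),
          carlitzD Fq q i ^ (m / q ^ i % q + k / q ^ i % q + Nat.carry q m k i) := by
        simp only [Nat.digit_add_add_mul_carry (by omega : 0 < q)]
    _ = _ := by
        rw [mul_assoc, ← prod_carlitzD_pow hq _ (Nat.carry_zero m k),
          carlitzFactorial_eq_prod hq1 (hR1 (by omega)),
          carlitzFactorial_eq_prod hq1 (hR1 (by omega)), ← prod_mul_distrib, ← prod_mul_distrib]
        simp only [pow_add]

theorem carlitzBinom_eq_prod {p s : ℕ} [Fact p.Prime] [CharP Fq p] (hq : q = p ^ s)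
    (hq1 : 1 < q) {n m R : ℕ} (hmn : m ≤ n) (hR : n < q ^ R) :
    carlitzBinom Fq q n m =
      ∏ i ∈ range R, (X ^ q ^ (i + 1) - X) ^ Nat.carry q m (n - m) (i + 1) := by
  have hfac := carlitzFactorial_add (Fq := Fq) hq hq1 (m := m) (k := n - m) (by omega : _ < q ^ R)
  rw [Nat.add_sub_cancel' hmn] at hfac
  rw [carlitzBinom, if_pos hmn, hfac, mul_div_cancel_left₀ _
    (mul_ne_zero (carlitzFactorial_ne_zero hq1 _) (carlitzFactorial_ne_zero hq1 _))]

theorem carlitzBinom_eq_zero_of_lt {n m : ℕ} (h : n < m) : carlitzBinom Fq q n m = 0 :=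
  if_neg h.not_ge

end Factorial

section Lucas

variable {Fq : Type*} [Field Fq] {S : Type*} [CommRing S] (φ : Fq[X] →+* S) {q t : ℕ}

theorem map_X_pow_pow_add_sub_X (hX : φ X ^ q ^ t = φ X) (j : ℕ) :
    φ (X ^ q ^ (t + j) - X) = φ (X ^ q ^ j - X) := by
  rw [map_sub, map_sub, map_pow, map_pow, pow_add, pow_mul, hX]

theorem map_X_pow_pow_sub_X (hX : φ X ^ q ^ t = φ X) : φ (X ^ q ^ t - X) = 0 := by
  rw [map_sub, map_pow, hX, sub_self]

variable {p s : ℕ} [Fact p.Prime] [CharP Fq p]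

theorem map_carlitzBinom_add_mul_of_le (hq : q = p ^ s) (hq1 : 1 < q) (hX : φ X ^ q ^ t = φ X)
    {n₁ m₁ n₂ m₂ : ℕ} (hn₁ : n₁ < q ^ t) (hm₁ : m₁ ≤ n₁) (hm₂ : m₂ ≤ n₂) :
    φ (carlitzBinom Fq q (n₁ + q ^ t * n₂) (m₁ + q ^ t * m₂)) =
      φ (carlitzBinom Fq q n₁ m₁) * φ (carlitzBinom Fq q n₂ m₂) := by
  obtain ⟨R, hR⟩ : ∃ R, n₂ < q ^ R := ⟨n₂, Nat.lt_pow_self hq1⟩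
  have hn : n₁ + q ^ t * n₂ < q ^ (t + R) := by
    rw [pow_add]; nlinarith [Nat.mul_le_mul_left (q ^ t) hR]
  obtain ⟨d, rfl⟩ := Nat.exists_eq_add_of_le hm₂
  have hsub : n₁ + q ^ t * (m₂ + d) - (m₁ + q ^ t * m₂) = (n₁ - m₁) + q ^ t * (m₂ + d - m₂) := by
    rw [Nat.add_sub_cancel_left, mul_add]; omega
  rw [carlitzBinom_eq_prod hq hq1 (by nlinarith) hn, hsub, prod_range_add, map_mul,
    carlitzBinom_eq_prod hq hq1 hm₁ hn₁, carlitzBinom_eq_prod hq hq1 hm₂ hR]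
  congr 1
  · refine congrArg φ (prod_congr rfl fun i hi => ?_)
    rw [Nat.carry_add_mul_pow_of_le _ _ (mem_range.mp hi)]
  · rw [map_prod, map_prod]
    refine prod_congr rfl fun i _ => ?_
    rw [add_assoc, Nat.carry_add_mul_pow_add _ _ (by omega) (by omega) (by omega), map_pow, map_pow,
      map_X_pow_pow_add_sub_X φ hX]

theorem map_carlitzBinom_add_mul_eq_zero (hq : q = p ^ s) (hq1 : 1 < q)
    (hX : φ X ^ q ^ t = φ X) {n₁ m₁ n₂ m₂ : ℕ} (hnm₁ : n₁ < m₁) (hm₁ : m₁ < q ^ t)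
    (hm₂ : m₂ < n₂) : φ (carlitzBinom Fq q (n₁ + q ^ t * n₂) (m₁ + q ^ t * m₂)) = 0 := by
  have ht : t ≠ 0 := by rintro rfl; rw [pow_zero] at hm₁; omega
  obtain ⟨R, hR⟩ : ∃ R, n₂ < q ^ R := ⟨n₂, Nat.lt_pow_self hq1⟩
  have hn : n₁ + q ^ t * n₂ < q ^ (t + R) := by
    rw [pow_add]; nlinarith [Nat.mul_le_mul_left (q ^ t) hR]
  obtain ⟨d, rfl⟩ := Nat.exists_eq_add_of_lt hm₂
  have hsub : n₁ + q ^ t * (m₂ + d + 1) - (m₁ + q ^ t * m₂) =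
      (q ^ t + n₁ - m₁) + q ^ t * d := by
    rw [mul_add, mul_add, mul_one]; omega
  rw [carlitzBinom_eq_prod hq hq1 (by nlinarith) hn, hsub, map_prod]
  refine prod_eq_zero (i := t - 1) (mem_range.mpr (by omega)) ?_
  rw [Nat.sub_add_cancel (by omega), Nat.carry_add_mul_pow_self _ _ hm₁ (by omega) (by omega),
    pow_one, map_X_pow_pow_sub_X φ hX]

theorem map_carlitzBinom_add_mul (hq : q = p ^ s) (hq1 : 1 < q) (hX : φ X ^ q ^ t = φ X)
    {n₁ m₁ : ℕ} (n₂ m₂ : ℕ) (hn₁ : n₁ < q ^ t) (hm₁ : m₁ < q ^ t) :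
    φ (carlitzBinom Fq q (n₁ + q ^ t * n₂) (m₁ + q ^ t * m₂)) =
      φ (carlitzBinom Fq q n₁ m₁) * φ (carlitzBinom Fq q n₂ m₂) := by
  rcases le_or_gt m₁ n₁ with h₁ | h₁
  · rcases le_or_gt m₂ n₂ with h₂ | h₂
    · exact map_carlitzBinom_add_mul_of_le φ hq hq1 hX hn₁ h₁ h₂
    · rw [carlitzBinom_eq_zero_of_lt h₂, carlitzBinom_eq_zero_of_lt, map_zero, mul_zero]
      nlinarith [Nat.mul_le_mul_left (q ^ t) h₂]
  · rw [carlitzBinom_eq_zero_of_lt h₁, map_zero, zero_mul]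
    rcases lt_or_ge m₂ n₂ with h₂ | h₂
    · exact map_carlitzBinom_add_mul_eq_zero φ hq hq1 hX h₁ hm₁ h₂
    · rw [carlitzBinom_eq_zero_of_lt, map_zero]
      nlinarith [Nat.mul_le_mul_left (q ^ t) h₂]

end Lucas

theorem sum_carlitzEps_mul_pow {Fq : Type*} [Field Fq] (q : ℕ) {℘ : Fq[X]}
    {𝔮 : (Fq[X] ⧸ Ideal.span {℘})ˣ} (hg : ∀ u, u ∈ Subgroup.zpowers 𝔮) (hfin : IsOfFinOrder 𝔮)
    {R : Type*} [CommSemiring R] (χ : MulChar (Fq[X] ⧸ Ideal.span {℘}) R) (n : ℕ) :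
    ∑ j ∈ range (orderOf 𝔮), (carlitzEps Fq q ℘ 𝔮 j n : R) * χ 𝔮 ^ j =
      ∑ m ∈ range (n + 1), χ (Ideal.Quotient.mk _ (carlitzBinom Fq q n m)) := by
  classical
  have hcount : ∀ j : ℕ, carlitzEps Fq q ℘ 𝔮 j n =
      #{m ∈ range (n + 1) |
        Ideal.Quotient.mk (Ideal.span {℘}) (carlitzBinom Fq q n m) = ↑(𝔮 ^ j)} := by
    intro j
    rw [carlitzEps, zpow_natCast, ← Set.ncard_coe_finset]
    congr 1
    ext m
    simp
  simp only [hcount, natCast_card_filter, sum_mul, ite_mul, one_mul, zero_mul]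
  rw [sum_comm]
  exact sum_congr rfl fun m _ => (χ.eq_sum_range_orderOf hg hfin _).symm

theorem carlitzEps_poly_concat_congr_general (Fq : Type*) [Field Fq] [Fintype Fq]
    (p s : ℕ) (hp : p.Prime) (hcard : Fintype.card Fq = p ^ s)
    (h : ℕ) (℘ : Polynomial Fq) (hirr : Irreducible ℘) (hdeg : ℘.natDegree = h)
    (𝔮 : (Polynomial Fq ⧸ Ideal.span {℘})ˣ) (hgen : ∀ x, x ∈ Subgroup.zpowers 𝔮)
    (a b : List ℕ) (ha' : ∀ x ∈ a, x < (p ^ s) ^ h) :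
    ((X : Polynomial ℤ) ^ ((p ^ s) ^ h - 1) - 1) ∣
      ((∑ m ∈ Finset.range ((p ^ s) ^ h - 1),
          (Polynomial.C
            (carlitzEps Fq (p ^ s) ℘ 𝔮 (m : ℤ) (Nat.ofDigits ((p ^ s) ^ h) (a ++ b)) : ℤ)) *
            X ^ m) -
        (∑ m ∈ Finset.range ((p ^ s) ^ h - 1),
          (Polynomial.C
            (carlitzEps Fq (p ^ s) ℘ 𝔮 (m : ℤ) (Nat.ofDigits ((p ^ s) ^ h) a) : ℤ)) *
            X ^ m) *
        (∑ m ∈ Finset.range ((p ^ s) ^ h - 1),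
          (Polynomial.C
            (carlitzEps Fq (p ^ s) ℘ 𝔮 (m : ℤ) (Nat.ofDigits ((p ^ s) ^ h) b) : ℤ)) *
            X ^ m)) := by
  have := Fact.mk hp
  have : CharP Fq p := charP_of_card_eq_prime_pow hcard
  have : Finite (Fq[X] ⧸ Ideal.span {℘}) := finite_quotient_span_singleton hirr.ne_zero
  have : Nontrivial (Fq[X] ⧸ Ideal.span {℘}) :=
    Ideal.Quotient.nontrivial_iff.mpr (mt Ideal.span_singleton_eq_top.mp hirr.not_isUnit)
  have hq1 : 1 < p ^ s := hcard ▸ Fintype.one_lt_card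
  have hcardK : Nat.card Fq ^ ℘.natDegree = (p ^ s) ^ h := by
    rw [Nat.card_eq_fintype_card, hcard, hdeg]
  have hord : orderOf 𝔮 = (p ^ s) ^ h - 1 := by
    rw [orderOf_eq_natCard_pow_natDegree_sub_one hirr hgen, hcardK]
  set φ := Ideal.Quotient.mk (Ideal.span {℘})
  have hX : ∀ L, φ X ^ (p ^ s) ^ (h * L) = φ X := fun L => by
    rw [pow_mul, ← hcardK]
    exact pow_natCard_pow_natDegree_pow hirr L _
  set π := Ideal.Quotient.mk (Ideal.span {(X : ℤ[X]) ^ ((p ^ s) ^ h - 1) - 1})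
  have hy : π X ^ orderOf 𝔮 = 1 := by
    rw [hord, ← map_pow, ← map_one π, Ideal.Quotient.mk_eq_mk_iff_sub_mem]
    exact Ideal.mem_span_singleton_self _
  obtain ⟨χ, hχ⟩ := exists_mulChar_apply_eq hgen (isOfFinOrder_of_finite 𝔮) hy
  have hΓ : ∀ n, π (∑ m ∈ range ((p ^ s) ^ h - 1), C (carlitzEps Fq (p ^ s) ℘ 𝔮 m n : ℤ) * X ^ m) =
      ∑ m ∈ range (n + 1), χ (φ (carlitzBinom Fq (p ^ s) n m)) := fun n => by
    rw [← sum_carlitzEps_mul_pow _ hgen (isOfFinOrder_of_finite 𝔮) χ n, hord, hχ]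
    simp [map_sum]
  have ha : Nat.ofDigits ((p ^ s) ^ h) a < (p ^ s) ^ (h * a.length) := by
    rw [pow_mul]
    exact Nat.ofDigits_lt_base_pow_length (Nat.one_lt_pow (hdeg ▸ hirr.natDegree_pos).ne' hq1) ha'
  rw [← Ideal.mem_span_singleton, ← Ideal.Quotient.eq_zero_iff_mem, map_sub, sub_eq_zero, map_mul,
    hΓ, hΓ, hΓ, Nat.ofDigits_append, ← pow_mul (p ^ s) h a.length]
  refine sum_range_add_mul_eq_mul (fun n m => χ (φ (carlitzBinom Fq (p ^ s) n m))) (fun hnm => ?_)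
    _ ha fun m₁ hm₁ m₂ => ?_
  · rw [carlitzBinom_eq_zero_of_lt hnm, map_zero, χ.map_zero]
  · rw [map_carlitzBinom_add_mul φ rfl hq1 (hX _) _ _ ha hm₁, map_mul]

/-- The map `Γ : ᾱ ↦ Σ_{m=0}^{q^h−2} ε_m(z_ᾱ(h)) x^m` is a semigroup homomorphism from
`(S_h^ω, ⋆)` (words = nonempty lists of digits `< q^h`, `z_ᾱ(h) = Nat.ofDigits (q^h) ᾱ`,
`⋆` = list append) to the multiplicative semigroup `ℤ[x]/(x^{q^h−1} − 1)`:
`Γ(ᾱ⋆β̄) ≡ Γ(ᾱ)·Γ(β̄) (mod (x^{q^h−1} − 1))` in `ℤ[x]`. -/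
theorem carlitzEps_poly_concat_congr (Fq : Type*) [Field Fq] [Fintype Fq]
    (p s : ℕ) (hp : p.Prime) (hs : 0 < s) (hcard : Fintype.card Fq = p ^ s)
    (h : ℕ) (hh : 1 ≤ h) (℘ : Polynomial Fq) (hirr : Irreducible ℘) (hdeg : ℘.natDegree = h)
    (𝔮 : (Polynomial Fq ⧸ Ideal.span {℘})ˣ) (hgen : ∀ x, x ∈ Subgroup.zpowers 𝔮)
    (a b : List ℕ) (ha : a ≠ []) (ha' : ∀ x ∈ a, x < (p ^ s) ^ h)
    (hb : b ≠ []) (hb' : ∀ x ∈ b, x < (p ^ s) ^ h) :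
    ((X : Polynomial ℤ) ^ ((p ^ s) ^ h - 1) - 1) ∣
      ((∑ m ∈ Finset.range ((p ^ s) ^ h - 1),
          (Polynomial.C
            (carlitzEps Fq (p ^ s) ℘ 𝔮 (m : ℤ) (Nat.ofDigits ((p ^ s) ^ h) (a ++ b)) : ℤ)) *
            X ^ m) -
        (∑ m ∈ Finset.range ((p ^ s) ^ h - 1),
          (Polynomial.C
            (carlitzEps Fq (p ^ s) ℘ 𝔮 (m : ℤ) (Nat.ofDigits ((p ^ s) ^ h) a) : ℤ)) *
            X ^ m) *
        (∑ m ∈ Finset.range ((p ^ s) ^ h - 1),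
          (Polynomial.C
            (carlitzEps Fq (p ^ s) ℘ 𝔮 (m : ℤ) (Nat.ofDigits ((p ^ s) ^ h) b) : ℤ)) *
            X ^ m)) :=
  carlitzEps_poly_concat_congr_general Fq p s hp hcard h ℘ hirr hdeg 𝔮 hgen a b ha'
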